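/- For every real $q$ with $|q|<1/4$, the series $I_0(q)=\sum_{d\ge 0}\binom{2d}{d} q^d$ and $I_1(q)=2\sum_{d\ge 1}\binom{2d}{d}\,(H_{2d}-H_d)\, q^d$ converge, $I_0(q)\ne 0$, the quotient $I_1/I_0$ is differentiable on $(-1/4,1/4)$, and the identity $1 + q\,\frac{d}{dq}\Big(\frac{I_1}{I_0}\Big)(q) = \frac{1}{\sqrt{1-4q}}$ holds. -/

import Mathlib

/-!
The coefficient recurrences `(d + 1) C(2d+2, d+1) = (4d + 2) C(2d, d)` and, for
`e_d = C(2d, d) (H_{2d} - H_d)`, `(d + 1) e_{d+1} = (4d + 2) e_d + Cat_d` are the coefficientwise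
forms of `(1 - 4q) I₀' - 2 I₀ = 0` and `(1 - 4q) E' - 2 E = C`, where `E = I₁ / 2` and `C` is the
Catalan generating function. The first gives `I₀ = 1 / √(1 - 4q)`; then `(q C)' = I₀` integrates
to `q C = (1 - √(1 - 4q)) / 2`. Hence `I₁ / I₀ = 2 E √(1 - 4q)` has derivative `2 C / √(1 - 4q)`,
and `1 + 2 q C / √(1 - 4q) = 1 / √(1 - 4q)`.
-/

open Real

/-- `I₀(q) = ∑_{d ≥ 0} C(2d, d) q^d`. -/
noncomputable def I₀ (q : ℝ) : ℝ := ∑' d : ℕ, (Nat.centralBinom d : ℝ) * q ^ d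

/-- `I₁(q) = 2 ∑_{d ≥ 1} C(2d, d) (H_{2d} - H_d) q^d` (the `d = 0` term vanishes). -/
noncomputable def I₁ (q : ℝ) : ℝ :=
  2 * ∑' d : ℕ, (Nat.centralBinom d : ℝ) * ((harmonic (2 * d) : ℝ) - (harmonic d : ℝ)) * q ^ d

section PowerSeries

variable {a : ℕ → ℝ} {K ρ x : ℝ}

lemma summable_natCast_pow_mul_mul_pow (ha : ∀ d, |a d| * ρ ^ d ≤ K) (hx : |x| < ρ) (k : ℕ) :
    Summable fun d : ℕ => (d : ℝ) ^ k * a d * x ^ d := by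
  have hρ : 0 < ρ := (abs_nonneg x).trans_lt hx
  have hr : ‖|x| / ρ‖ < 1 := by
    rwa [Real.norm_eq_abs, abs_div, abs_abs, abs_of_pos hρ, div_lt_one hρ]
  refine .of_norm_bounded ((summable_pow_mul_geometric_of_norm_lt_one k hr).mul_left K) fun d => ?_
  have hcoeff : |a d| * |x| ^ d ≤ K * (|x| / ρ) ^ d := by
    rw [div_pow, mul_div, le_div_iff₀ (by positivity)]
    calc |a d| * |x| ^ d * ρ ^ d = (|a d| * ρ ^ d) * |x| ^ d := by ring
      _ ≤ K * |x| ^ d := by gcongr; exact ha d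
  simp only [norm_mul, norm_pow, Real.norm_eq_abs, Nat.abs_cast]
  calc (d : ℝ) ^ k * |a d| * |x| ^ d = (d : ℝ) ^ k * (|a d| * |x| ^ d) := by ring
    _ ≤ (d : ℝ) ^ k * (K * (|x| / ρ) ^ d) := by gcongr
    _ = K * ((d : ℝ) ^ k * (|x| / ρ) ^ d) := by ring

lemma summable_mul_pow (ha : ∀ d, |a d| * ρ ^ d ≤ K) (hx : |x| < ρ) :
    Summable fun d : ℕ => a d * x ^ d := by
  simpa using summable_natCast_pow_mul_mul_pow ha hx 0

lemma summable_natCast_mul_mul_pow (ha : ∀ d, |a d| * ρ ^ d ≤ K) (hx : |x| < ρ) :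
    Summable fun d : ℕ => (d : ℝ) * a d * x ^ d := by
  simpa using summable_natCast_pow_mul_mul_pow ha hx 1

lemma summable_succ_mul_mul_pow (ha : ∀ d, |a d| * ρ ^ d ≤ K) (hx : |x| < ρ) :
    Summable fun d : ℕ => ((d : ℝ) + 1) * a (d + 1) * x ^ d := by
  have hρ : 0 < ρ := (abs_nonneg x).trans_lt hx
  have ha' : ∀ d, |a (d + 1)| * ρ ^ d ≤ K / ρ := fun d => by
    rw [le_div_iff₀ hρ, mul_assoc, ← pow_succ]; exact ha (d + 1)
  refine ((summable_natCast_mul_mul_pow ha' hx).add (summable_mul_pow ha' hx)).congr fun d => ?_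
  ring

lemma mul_tsum_succ_mul_mul_pow (hs : Summable fun d : ℕ => (d : ℝ) * a d * x ^ d) :
    x * ∑' d : ℕ, ((d : ℝ) + 1) * a (d + 1) * x ^ d = ∑' d : ℕ, (d : ℝ) * a d * x ^ d := by
  rw [hs.tsum_eq_zero_add, ← tsum_mul_left]
  simp only [CharP.cast_eq_zero, zero_mul, zero_add, Nat.cast_add, Nat.cast_one]
  exact tsum_congr fun d => by ring

lemma hasDerivAt_tsum_mul_pow (ha : ∀ d, |a d| * ρ ^ d ≤ K) (hx : |x| < ρ) :
    HasDerivAt (fun y => ∑' d : ℕ, a d * y ^ d)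
      (∑' d : ℕ, ((d : ℝ) + 1) * a (d + 1) * x ^ d) x := by
  obtain ⟨r, hxr, hrρ⟩ := exists_between hx
  have hr : 0 < r := (abs_nonneg x).trans_lt hxr
  have hu : Summable fun d : ℕ => (d : ℝ) * |a d| * r ^ (d - 1) := by
    refine ((summable_natCast_mul_mul_pow (a := fun d => |a d|)
      (fun d => by rw [abs_abs]; exact ha d) (by rwa [abs_of_pos hr])).div_const r).congr
      fun d => ?_
    rcases d with _ | d
    · simp
    · rw [Nat.add_sub_cancel, pow_succ]; field_simp
  have hbound : ∀ (d : ℕ) y, y ∈ Set.Ioo (-r) r →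
      ‖a d * ((d : ℝ) * y ^ (d - 1))‖ ≤ (d : ℝ) * |a d| * r ^ (d - 1) := by
    intro d y hy
    have hyr : |y| ≤ r := abs_le.2 ⟨hy.1.le, hy.2.le⟩
    simp only [norm_mul, norm_pow, Real.norm_eq_abs, Nat.abs_cast]
    calc |a d| * ((d : ℝ) * |y| ^ (d - 1)) = (d : ℝ) * |a d| * |y| ^ (d - 1) := by ring
      _ ≤ (d : ℝ) * |a d| * r ^ (d - 1) := by gcongr
  have hxt : x ∈ Set.Ioo (-r) r := abs_lt.1 hxr
  have hderiv := hasDerivAt_tsum_of_isPreconnected hu isOpen_Ioo isPreconnected_Ioo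
    (fun d y _ => (hasDerivAt_pow d y).const_mul (a d)) hbound (y₀ := 0) ⟨by linarith, hr⟩
    (summable_mul_pow ha (by rw [abs_zero]; exact hr.trans hrρ)) hxt
  rw [(Summable.of_norm_bounded hu fun d => hbound d x hxt).tsum_eq_zero_add] at hderiv
  refine hderiv.congr_deriv ?_
  simp only [CharP.cast_eq_zero, zero_mul, mul_zero, zero_add, Nat.cast_add, Nat.cast_one,
    Nat.add_sub_cancel]
  exact tsum_congr fun d => by ring

lemma tsum_mul_pow_ode_of_recurrence {b : ℕ → ℝ} {α β : ℝ} (ha : ∀ d, |a d| * ρ ^ d ≤ K)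
    (hx : |x| < ρ) (hrec : ∀ d : ℕ, ((d : ℝ) + 1) * a (d + 1) = (α * d + β) * a d + b d) :
    (1 - α * x) * ∑' d : ℕ, ((d : ℝ) + 1) * a (d + 1) * x ^ d - β * ∑' d : ℕ, a d * x ^ d
      = ∑' d : ℕ, b d * x ^ d := by
  have h0 := summable_mul_pow ha hx
  have h1 := summable_natCast_mul_mul_pow ha hx
  have h' := summable_succ_mul_mul_pow ha hx
  calc _ = ∑' d : ℕ, ((d : ℝ) + 1) * a (d + 1) * x ^ d
          - α * (x * ∑' d : ℕ, ((d : ℝ) + 1) * a (d + 1) * x ^ d) - β * ∑' d : ℕ, a d * x ^ d := by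
        ring
    _ = ∑' d : ℕ, (((d : ℝ) + 1) * a (d + 1) * x ^ d - α * ((d : ℝ) * a d * x ^ d)
          - β * (a d * x ^ d)) := by
        rw [mul_tsum_succ_mul_mul_pow h1, ← tsum_mul_left, ← tsum_mul_left,
          (h'.sub (h1.mul_left α)).tsum_sub (h0.mul_left β), h'.tsum_sub (h1.mul_left α)]
    _ = ∑' d : ℕ, b d * x ^ d := tsum_congr fun d => by linear_combination x ^ d * hrec d

end PowerSeries

lemma eq_of_hasDerivAt_zero_of_abs_lt {f : ℝ → ℝ} {ρ x : ℝ}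
    (hf : ∀ y, |y| < ρ → HasDerivAt f 0 y) (hx : |x| < ρ) : f x = f 0 := by
  have hball : ∀ {y : ℝ}, y ∈ Metric.ball 0 ρ ↔ |y| < ρ := by
    intro y; rw [mem_ball_zero_iff, Real.norm_eq_abs]
  exact Metric.isOpen_ball.is_const_of_deriv_eq_zero (convex_ball 0 ρ).isPreconnected
    (fun y hy => (hf y (hball.1 hy)).differentiableAt.differentiableWithinAt)
    (fun y hy => (hf y (hball.1 hy)).deriv) (hball.2 hx)
    (hball.2 (abs_zero.trans_lt ((abs_nonneg x).trans_lt hx)))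

lemma sqrt_one_sub_four_mul_pos {x : ℝ} (hx : x < 1 / 4) : 0 < √(1 - 4 * x) :=
  Real.sqrt_pos.2 (by linarith)

lemma sq_sqrt_one_sub_four_mul {x : ℝ} (hx : x < 1 / 4) : √(1 - 4 * x) ^ 2 = 1 - 4 * x :=
  Real.sq_sqrt (by linarith)

lemma hasDerivAt_sqrt_one_sub_four_mul {x : ℝ} (hx : x < 1 / 4) :
    HasDerivAt (fun y => √(1 - 4 * y)) (-2 / √(1 - 4 * x)) x := by
  have hlin : HasDerivAt (fun y : ℝ => 1 - 4 * y) (-4) x := by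
    simpa using ((hasDerivAt_id x).const_mul 4).const_sub 1
  have hS := sqrt_one_sub_four_mul_pos hx
  refine (hlin.sqrt (by linarith)).congr_deriv ?_
  field_simp
  ring

noncomputable def harmonicGap (d : ℕ) : ℝ := harmonic (2 * d) - harmonic d

lemma harmonicGap_succ (d : ℕ) :
    harmonicGap (d + 1) = harmonicGap d + 1 / ((2 * d + 1) * (2 * d + 2)) := by
  simp only [harmonicGap, show 2 * (d + 1) = 2 * d + 1 + 1 by ring, harmonic_succ]
  push_cast
  field_simp
  ring

lemma harmonicGap_nonneg (d : ℕ) : 0 ≤ harmonicGap d := by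
  induction d with
  | zero => simp [harmonicGap]
  | succ d ih => rw [harmonicGap_succ]; positivity

lemma harmonicGap_le (d : ℕ) : harmonicGap d ≤ d / (d + 1) := by
  induction d with
  | zero => simp [harmonicGap]
  | succ d ih =>
    rw [harmonicGap_succ]
    calc harmonicGap d + 1 / ((2 * d + 1) * (2 * d + 2))
        ≤ d / (d + 1) + 1 / ((d + 1) * (d + 2)) := by gcongr <;> linarith
      _ = (d + 1 : ℕ) / ((d + 1 : ℕ) + 1) := by push_cast; field_simp; ring

lemma harmonicGap_le_one (d : ℕ) : harmonicGap d ≤ 1 :=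
  (harmonicGap_le d).trans (div_le_one_of_le₀ (by linarith) (by positivity))

lemma centralBinom_succ_recurrence (d : ℕ) :
    ((d : ℝ) + 1) * Nat.centralBinom (d + 1) = (4 * d + 2) * Nat.centralBinom d := by
  have := congrArg (Nat.cast : ℕ → ℝ) (Nat.succ_mul_centralBinom_succ d)
  push_cast at this
  linear_combination this

lemma centralBinom_mul_harmonicGap_succ_recurrence (d : ℕ) :
    ((d : ℝ) + 1) * (Nat.centralBinom (d + 1) * harmonicGap (d + 1))
      = (4 * d + 2) * (Nat.centralBinom d * harmonicGap d) + catalan d := by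
  have hcat := congrArg (Nat.cast : ℕ → ℝ) (succ_mul_catalan_eq_centralBinom d)
  push_cast at hcat
  have hcorrection : ((d : ℝ) + 1) * Nat.centralBinom (d + 1) * (1 / ((2 * d + 1) * (2 * d + 2)))
      = catalan d := by
    rw [centralBinom_succ_recurrence, ← hcat]
    field_simp
    ring
  rw [harmonicGap_succ]
  linear_combination harmonicGap d * centralBinom_succ_recurrence d + hcorrection

lemma abs_mul_one_div_four_pow_le_one {t : ℝ} {d : ℕ} (h0 : 0 ≤ t) (h : t ≤ 4 ^ d) :
    |t| * (1 / 4) ^ d ≤ 1 := by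
  rw [abs_of_nonneg h0, one_div_pow, mul_one_div, div_le_one (by positivity)]
  exact h

lemma cast_centralBinom_le_four_pow (d : ℕ) : (Nat.centralBinom d : ℝ) ≤ 4 ^ d := by
  exact_mod_cast Nat.centralBinom_le_four_pow d

lemma abs_centralBinom_mul_le (d : ℕ) : |(Nat.centralBinom d : ℝ)| * (1 / 4) ^ d ≤ 1 :=
  abs_mul_one_div_four_pow_le_one (Nat.cast_nonneg _) (cast_centralBinom_le_four_pow d)

lemma abs_centralBinom_mul_harmonicGap_mul_le (d : ℕ) :
    |Nat.centralBinom d * harmonicGap d| * (1 / 4) ^ d ≤ 1 := by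
  refine abs_mul_one_div_four_pow_le_one (by have := harmonicGap_nonneg d; positivity) ?_
  calc (Nat.centralBinom d : ℝ) * harmonicGap d ≤ Nat.centralBinom d * 1 := by
        gcongr; exact harmonicGap_le_one d
    _ ≤ 4 ^ d := by rw [mul_one]; exact cast_centralBinom_le_four_pow d

lemma abs_catalan_mul_le (d : ℕ) : |(catalan d : ℝ)| * (1 / 4) ^ d ≤ 1 := by
  refine abs_mul_one_div_four_pow_le_one (Nat.cast_nonneg _) ?_
  have : catalan d ≤ Nat.centralBinom d :=
    succ_mul_catalan_eq_centralBinom d ▸ Nat.le_mul_of_pos_left _ d.succ_pos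
  exact (Nat.cast_le.2 this).trans (cast_centralBinom_le_four_pow d)

lemma I₀_zero : I₀ 0 = 1 := by
  rw [I₀, tsum_eq_single 0 fun d hd => by simp [hd]]
  simp

lemma I₀_mul_sqrt {x : ℝ} (hx : |x| < 1 / 4) : I₀ x * √(1 - 4 * x) = 1 := by
  have hconst : ∀ y : ℝ, |y| < 1 / 4 → HasDerivAt (fun y => I₀ y * √(1 - 4 * y)) 0 y := by
    intro y hy
    have hode := tsum_mul_pow_ode_of_recurrence (b := 0) (α := 4) (β := 2)
      abs_centralBinom_mul_le hy fun d => by simpa using centralBinom_succ_recurrence d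
    simp only [Pi.zero_apply, zero_mul, tsum_zero] at hode
    have hS := sqrt_one_sub_four_mul_pos (abs_lt.1 hy).2
    refine ((hasDerivAt_tsum_mul_pow abs_centralBinom_mul_le hy).mul
      (hasDerivAt_sqrt_one_sub_four_mul (abs_lt.1 hy).2)).congr_deriv ?_
    field_simp
    rw [sq_sqrt_one_sub_four_mul (abs_lt.1 hy).2]
    linear_combination hode
  simpa [I₀_zero] using eq_of_hasDerivAt_zero_of_abs_lt hconst hx

lemma mul_tsum_catalan {x : ℝ} (hx : |x| < 1 / 4) :
    x * ∑' d : ℕ, (catalan d : ℝ) * x ^ d = (1 - √(1 - 4 * x)) / 2 := by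
  have hconst : ∀ y : ℝ, |y| < 1 / 4 → HasDerivAt
      (fun y => y * ∑' d : ℕ, (catalan d : ℝ) * y ^ d - (1 - √(1 - 4 * y)) / 2) 0 y := by
    intro y hy
    have hs₀ := summable_mul_pow abs_catalan_mul_le hy
    have hs₁ := summable_natCast_mul_mul_pow abs_catalan_mul_le hy
    have hsum : ∑' d : ℕ, (catalan d : ℝ) * y ^ d
        + y * ∑' d : ℕ, ((d : ℝ) + 1) * catalan (d + 1) * y ^ d = I₀ y := by
      rw [mul_tsum_succ_mul_mul_pow hs₁, ← hs₀.tsum_add hs₁, I₀]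
      exact tsum_congr fun d => by rw [← succ_mul_catalan_eq_centralBinom]; push_cast; ring
    have hI₀ : I₀ y = 1 / √(1 - 4 * y) := eq_one_div_of_mul_eq_one_left (I₀_mul_sqrt hy)
    have hS := hasDerivAt_sqrt_one_sub_four_mul (abs_lt.1 hy).2
    refine (((hasDerivAt_id' y).mul (hasDerivAt_tsum_mul_pow abs_catalan_mul_le hy)).sub
      (((hasDerivAt_const y 1).sub hS).div_const 2)).congr_deriv ?_
    linear_combination hsum + hI₀
  simpa [sub_eq_zero] using eq_of_hasDerivAt_zero_of_abs_lt hconst hx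

lemma hasDerivAt_I₁_div_I₀ {x : ℝ} (hx : |x| < 1 / 4) :
    HasDerivAt (fun y => I₁ y / I₀ y)
      (2 * (∑' d : ℕ, (catalan d : ℝ) * x ^ d) / √(1 - 4 * x)) x := by
  set E : ℝ → ℝ := fun y => ∑' d : ℕ, (Nat.centralBinom d : ℝ) * harmonicGap d * y ^ d
  have hratio : ∀ y : ℝ, |y| < 1 / 4 → I₁ y / I₀ y = 2 * E y * √(1 - 4 * y) := by
    intro y hy
    have hI := I₀_mul_sqrt hy
    rw [div_eq_iff (left_ne_zero_of_mul_eq_one hI), show I₁ y = 2 * E y from rfl]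
    linear_combination (-2 * E y) * hI
  have hev : (fun y => I₁ y / I₀ y) =ᶠ[nhds x] fun y => 2 * E y * √(1 - 4 * y) :=
    Filter.eventually_of_mem ((isOpen_lt continuous_abs continuous_const).mem_nhds hx) hratio
  have hode := tsum_mul_pow_ode_of_recurrence (α := 4) (β := 2)
    abs_centralBinom_mul_harmonicGap_mul_le hx centralBinom_mul_harmonicGap_succ_recurrence
  have hS := sqrt_one_sub_four_mul_pos (abs_lt.1 hx).2
  have hE := hasDerivAt_tsum_mul_pow abs_centralBinom_mul_harmonicGap_mul_le hx
  refine (((hE.const_mul 2).mul (hasDerivAt_sqrt_one_sub_four_mul (abs_lt.1 hx).2)).congr_deriv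
    ?_).congr_of_eventuallyEq hev
  generalize ∑' d : ℕ, ((d : ℝ) + 1) * (Nat.centralBinom (d + 1) * harmonicGap (d + 1)) * x ^ d
    = E' at hode ⊢
  field_simp
  rw [sq_sqrt_one_sub_four_mul (abs_lt.1 hx).2]
  linear_combination hode

theorem I1_over_I0_deriv (q : ℝ) (hq : |q| < 1 / 4) :
    Summable (fun d : ℕ => (Nat.centralBinom d : ℝ) * q ^ d) ∧
    Summable (fun d : ℕ =>
      (Nat.centralBinom d : ℝ) * ((harmonic (2 * d) : ℝ) - (harmonic d : ℝ)) * q ^ d) ∧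
    I₀ q ≠ 0 ∧
    DifferentiableOn ℝ (fun x => I₁ x / I₀ x) (Set.Ioo (-(1 / 4)) (1 / 4)) ∧
    1 + q * deriv (fun x => I₁ x / I₀ x) q = 1 / Real.sqrt (1 - 4 * q) := by
  have hS := sqrt_one_sub_four_mul_pos (abs_lt.1 hq).2
  refine ⟨summable_mul_pow abs_centralBinom_mul_le hq,
    summable_mul_pow abs_centralBinom_mul_harmonicGap_mul_le hq,
    left_ne_zero_of_mul_eq_one (I₀_mul_sqrt hq),
    fun y hy => (hasDerivAt_I₁_div_I₀ (abs_lt.2 hy)).differentiableAt.differentiableWithinAt, ?_⟩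
  rw [(hasDerivAt_I₁_div_I₀ hq).deriv]
  calc 1 + q * (2 * (∑' d : ℕ, (catalan d : ℝ) * q ^ d) / √(1 - 4 * q))
      = 1 + 2 * (q * ∑' d : ℕ, (catalan d : ℝ) * q ^ d) / √(1 - 4 * q) := by ring
    _ = 1 / √(1 - 4 * q) := by rw [mul_tsum_catalan hq]; field_simp; ring
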